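/- Define f : ℝ → [0,∞) by f(x) = (1/ln 10)·(1/x − 1/x²) for x ∈ [1, 10), f(x) = (10/ln 10)·(1/x²) for x ∈ [10, 100), and f(x) = 0 otherwise. Then ∫_ℝ f dx = 1, and any random variable X whose law has density f with respect to Lebesgue measure is base-10 Benford. -/

import Mathlib

open MeasureTheory

namespace BergerHillAux

open Set

noncomputable def g₁ : ℝ → ℝ := fun x => (1 / Real.log 10) * (1 / x - 1 / x ^ 2)
noncomputable def g₂ : ℝ → ℝ := fun x => (10 / Real.log 10) * (1 / x ^ 2)

noncomputable def F : ℝ → ℝ := fun x =>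
  if 1 ≤ x ∧ x < 10 then (1 / Real.log 10) * (1 / x - 1 / x ^ 2)
  else if 10 ≤ x ∧ x < 100 then (10 / Real.log 10) * (1 / x ^ 2) else 0

lemma log10_pos : 0 < Real.log 10 := Real.log_pos (by norm_num)

lemma hb10 : (1:ℝ) < 10 := by norm_num

lemma g₁_nonneg {x : ℝ} (hx : 1 ≤ x) : 0 ≤ g₁ x := by
  have hx0 : (0:ℝ) < x := by linarith
  have h1 : 1 / x ^ 2 ≤ 1 / x := by
    rw [div_le_div_iff₀ (by positivity) hx0]; nlinarith
  have := log10_pos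
  have h2 : 0 ≤ 1 / x - 1 / x ^ 2 := by linarith
  have h3 : 0 ≤ 1 / Real.log 10 := by positivity
  exact mul_nonneg h3 h2

lemma g₂_nonneg {x : ℝ} : 0 ≤ g₂ x := by
  have := log10_pos
  unfold g₂; positivity

lemma F_eq_indicator (x : ℝ) :
    F x = (Ico (1:ℝ) 10).indicator g₁ x + (Ico (10:ℝ) 100).indicator g₂ x := by
  unfold F g₁ g₂
  simp only [indicator_apply, mem_Ico]
  split_ifs with h1 h2 <;> first
    | ring1
    | linarith [h1.1, h1.2, h2.1, h2.2]

lemma F_nonneg (x : ℝ) : 0 ≤ F x := by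
  rw [F_eq_indicator]
  refine add_nonneg (indicator_nonneg ?_ x) (indicator_nonneg ?_ x)
  · exact fun y hy => g₁_nonneg hy.1
  · exact fun y hy => g₂_nonneg

lemma cont_g₁ {A B : ℝ} (hA : (0:ℝ) < A) : ContinuousOn g₁ (Icc A B) := by
  apply ContinuousOn.mul continuousOn_const
  apply ContinuousOn.sub
  · exact continuousOn_const.div continuousOn_id (fun x hx => by
      have := hx.1; intro h; rw [h] at this; linarith)
  · exact continuousOn_const.div ((continuous_pow 2).continuousOn) (fun x hx =>
      pow_ne_zero 2 (ne_of_gt (lt_of_lt_of_le hA hx.1)))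

lemma cont_g₂ {A B : ℝ} (hA : (0:ℝ) < A) : ContinuousOn g₂ (Icc A B) := by
  apply ContinuousOn.mul continuousOn_const
  exact continuousOn_const.div ((continuous_pow 2).continuousOn) (fun x hx =>
      pow_ne_zero 2 (ne_of_gt (lt_of_lt_of_le hA hx.1)))

lemma int_g₁ {A B : ℝ} (hA : (0:ℝ) < A) : IntegrableOn g₁ (Ico A B) :=
  ((cont_g₁ hA).integrableOn_Icc).mono_set Ico_subset_Icc_self

lemma int_g₂ {A B : ℝ} (hA : (0:ℝ) < A) : IntegrableOn g₂ (Ico A B) :=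
  ((cont_g₂ hA).integrableOn_Icc).mono_set Ico_subset_Icc_self

lemma integrable_F : Integrable F := by
  have h1 : Integrable ((Ico (1:ℝ) 10).indicator g₁) :=
    (int_g₁ one_pos).integrable_indicator measurableSet_Ico
  have h2 : Integrable ((Ico (10:ℝ) 100).indicator g₂) :=
    (int_g₂ (by norm_num)).integrable_indicator measurableSet_Ico
  exact (h1.add h2).congr (Filter.Eventually.of_forall fun x => (F_eq_indicator x).symm)

lemma meas_g₁ : Measurable g₁ := by unfold g₁; fun_prop
lemma meas_g₂ : Measurable g₂ := by unfold g₂; fun_prop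

/-- FTC for g₁. -/
lemma ftc_g₁ {A B : ℝ} (hA : (0:ℝ) < A) (hAB : A ≤ B) :
    ∫ x in A..B, g₁ x
      = (Real.log B + B⁻¹) / Real.log 10 - (Real.log A + A⁻¹) / Real.log 10 := by
  have huIcc : uIcc A B = Icc A B := uIcc_of_le hAB
  apply intervalIntegral.integral_eq_sub_of_hasDerivAt
  · intro x hx
    rw [huIcc] at hx
    have hx0 : x ≠ 0 := by have := hx.1; intro h; rw [h] at this; linarith
    have h1 : HasDerivAt Real.log x⁻¹ x := Real.hasDerivAt_log hx0
    have h2 : HasDerivAt (fun y : ℝ => y⁻¹) (-(x^2)⁻¹) x := hasDerivAt_inv hx0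
    have h3 := (h1.add h2).div_const (Real.log 10)
    refine h3.congr_deriv ?_
    symm
    unfold g₁
    have hl := log10_pos
    field_simp
    ring
  · apply ContinuousOn.intervalIntegrable
    rw [huIcc]; exact cont_g₁ hA

lemma ftc_g₂ {A B : ℝ} (hA : (0:ℝ) < A) (hAB : A ≤ B) :
    ∫ x in A..B, g₂ x
      = (-(10 / Real.log 10) * B⁻¹) - (-(10 / Real.log 10) * A⁻¹) := by
  have huIcc : uIcc A B = Icc A B := uIcc_of_le hAB
  apply intervalIntegral.integral_eq_sub_of_hasDerivAt
  · intro x hx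
    rw [huIcc] at hx
    have hx0 : x ≠ 0 := by have := hx.1; intro h; rw [h] at this; linarith
    have h2 : HasDerivAt (fun y : ℝ => y⁻¹) (-(x^2)⁻¹) x := hasDerivAt_inv hx0
    have h3 := h2.const_mul (-(10 / Real.log 10))
    refine h3.congr_deriv ?_
    symm
    unfold g₂
    have hl := log10_pos
    field_simp
  · apply ContinuousOn.intervalIntegrable
    rw [huIcc]; exact cont_g₂ hA

/-- set lintegral of ofReal g over Ico equals ofReal of interval integral. -/
lemma lint_of_nonneg {g : ℝ → ℝ} {A B : ℝ} (hA : (0:ℝ) < A) (hAB : A ≤ B)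
    (hint : IntegrableOn g (Ico A B)) (hnn : ∀ x ∈ Ico A B, 0 ≤ g x) :
    ∫⁻ x in Ico A B, ENNReal.ofReal (g x) = ENNReal.ofReal (∫ x in A..B, g x) := by
  rw [← ofReal_integral_eq_lintegral_ofReal hint
      (ae_restrict_of_forall_mem measurableSet_Ico hnn)]
  congr 1
  rw [intervalIntegral.integral_of_le hAB,
    ← Measure.restrict_congr_set Ico_ae_eq_Ioc]


lemma logb_mem_Ico {x : ℝ} (h1 : 1 ≤ x) (h2 : x < 10) : Real.logb 10 x ∈ Ico (0:ℝ) 1 := by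
  have hx0 : (0:ℝ) < x := by linarith
  refine ⟨Real.logb_nonneg hb10 h1, ?_⟩
  rw [Real.logb_lt_iff_lt_rpow hb10 hx0, Real.rpow_one]; exact h2

lemma rpow_ten_mono {u v : ℝ} (h : u ≤ v) : (10:ℝ) ^ u ≤ (10:ℝ) ^ v :=
  Real.rpow_le_rpow_of_exponent_le (by norm_num) h

lemma one_le_rpow_ten {u : ℝ} (h : 0 ≤ u) : (1:ℝ) ≤ (10:ℝ) ^ u := by
  have := rpow_ten_mono h
  rwa [Real.rpow_zero] at this

lemma rpow_ten_le_ten {u : ℝ} (h : u ≤ 1) : (10:ℝ) ^ u ≤ 10 := by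
  have := rpow_ten_mono h
  rwa [Real.rpow_one] at this

lemma rpow_ten_pos (u : ℝ) : (0:ℝ) < (10:ℝ) ^ u := Real.rpow_pos_of_pos (by norm_num) u

lemma preim_inter_low {a b : ℝ} (ha : 0 ≤ a) (hb : b ≤ 1) :
    ((fun y => Int.fract (Real.logb 10 y)) ⁻¹' Ico a b) ∩ Ico (1:ℝ) 10
      = Ico ((10:ℝ) ^ a) ((10:ℝ) ^ b) := by
  ext x
  simp only [mem_inter_iff, mem_preimage, mem_Ico]
  constructor
  · rintro ⟨⟨hfa, hfb⟩, hx1, hx10⟩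
    have hx0 : (0:ℝ) < x := by linarith
    have hm := logb_mem_Ico hx1 hx10
    rw [Int.fract_eq_self.mpr ⟨hm.1, hm.2⟩] at hfa hfb
    exact ⟨(Real.le_logb_iff_rpow_le hb10 hx0).mp hfa,
      (Real.logb_lt_iff_lt_rpow hb10 hx0).mp hfb⟩
  · rintro ⟨hax, hxb⟩
    have h1x : (1:ℝ) ≤ x := le_trans (one_le_rpow_ten ha) hax
    have hx10 : x < 10 := lt_of_lt_of_le hxb (rpow_ten_le_ten hb)
    have hx0 : (0:ℝ) < x := by linarith
    have hm := logb_mem_Ico h1x hx10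
    rw [Int.fract_eq_self.mpr ⟨hm.1, hm.2⟩]
    exact ⟨⟨(Real.le_logb_iff_rpow_le hb10 hx0).mpr hax,
      (Real.logb_lt_iff_lt_rpow hb10 hx0).mpr hxb⟩, h1x, hx10⟩

lemma hundred_eq : ((10:ℝ)) ^ (2:ℝ) = 100 := by
  rw [show (2:ℝ) = ((2:ℕ):ℝ) by norm_num, Real.rpow_natCast]; norm_num

lemma fract_logb_high {x : ℝ} (h1 : 10 ≤ x) (h2 : x < 100) :
    Int.fract (Real.logb 10 x) = Real.logb 10 x - 1 := by
  have hx0 : (0:ℝ) < x := by linarith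
  have hl1 : 1 ≤ Real.logb 10 x := by
    rw [Real.le_logb_iff_rpow_le hb10 hx0, Real.rpow_one]; exact h1
  have hl2 : Real.logb 10 x < 2 := by
    rw [Real.logb_lt_iff_lt_rpow hb10 hx0, hundred_eq]; exact h2
  have h := Int.fract_sub_intCast (Real.logb 10 x) 1
  rw [← h]
  push_cast
  rw [Int.fract_eq_self.mpr ⟨by linarith, by linarith⟩]

lemma preim_inter_high {a b : ℝ} (ha : 0 ≤ a) (hb : b ≤ 1) :
    ((fun y => Int.fract (Real.logb 10 y)) ⁻¹' Ico a b) ∩ Ico (10:ℝ) 100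
      = Ico ((10:ℝ) ^ (a+1)) ((10:ℝ) ^ (b+1)) := by
  ext x
  simp only [mem_inter_iff, mem_preimage, mem_Ico]
  constructor
  · rintro ⟨⟨hfa, hfb⟩, hx1, hx10⟩
    have hx0 : (0:ℝ) < x := by linarith
    rw [fract_logb_high hx1 hx10] at hfa hfb
    constructor
    · rw [← Real.le_logb_iff_rpow_le hb10 hx0]; linarith
    · rw [← Real.logb_lt_iff_lt_rpow hb10 hx0]; linarith
  · rintro ⟨hax, hxb⟩
    have h10x : (10:ℝ) ≤ x := by
      refine le_trans ?_ hax
      have := rpow_ten_mono (by linarith : (1:ℝ) ≤ a + 1)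
      rwa [Real.rpow_one] at this
    have hx100 : x < 100 := by
      refine lt_of_lt_of_le hxb ?_
      have := rpow_ten_mono (by linarith : b + 1 ≤ (2:ℝ))
      rwa [hundred_eq] at this
    have hx0 : (0:ℝ) < x := by linarith
    rw [fract_logb_high h10x hx100]
    have hge : a + 1 ≤ Real.logb 10 x := (Real.le_logb_iff_rpow_le hb10 hx0).mpr hax
    have hlt : Real.logb 10 x < b + 1 := (Real.logb_lt_iff_lt_rpow hb10 hx0).mpr hxb
    exact ⟨⟨by linarith, by linarith⟩, h10x, hx100⟩

lemma ofReal_indicator' {s : Set ℝ} {g : ℝ → ℝ} (x : ℝ) :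
    ENNReal.ofReal (s.indicator g x) = s.indicator (fun t => ENNReal.ofReal (g t)) x := by
  by_cases h : x ∈ s <;> simp [h]

lemma measure_core {s : Set ℝ} (hs : MeasurableSet s) :
    (volume.withDensity fun x => ENNReal.ofReal (F x)) s
      = (∫⁻ x in s ∩ Ico (1:ℝ) 10, ENNReal.ofReal (g₁ x))
        + ∫⁻ x in s ∩ Ico (10:ℝ) 100, ENNReal.ofReal (g₂ x) := by
  rw [withDensity_apply _ hs]
  have hfi : ∀ x, ENNReal.ofReal (F x)
      = (Ico (1:ℝ) 10).indicator (fun t => ENNReal.ofReal (g₁ t)) x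
        + (Ico (10:ℝ) 100).indicator (fun t => ENNReal.ofReal (g₂ t)) x := by
    intro x
    rw [F_eq_indicator x,
      ENNReal.ofReal_add (indicator_nonneg (fun y hy => g₁_nonneg hy.1) x)
        (indicator_nonneg (fun y hy => g₂_nonneg) x),
      ofReal_indicator', ofReal_indicator']
  simp_rw [hfi]
  rw [lintegral_add_left ((meas_g₁.ennreal_ofReal).indicator measurableSet_Ico)]
  rw [lintegral_indicator measurableSet_Ico, lintegral_indicator measurableSet_Ico,
    Measure.restrict_restrict measurableSet_Ico, Measure.restrict_restrict measurableSet_Ico,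
    inter_comm (Ico (1:ℝ) 10) s, inter_comm (Ico (10:ℝ) 100) s]

lemma measurable_fract_logb : Measurable fun y : ℝ => Int.fract (Real.logb 10 y) := by
  have hlb : Measurable (Real.logb 10) := Real.measurable_log.div_const _
  exact hlb.fract

lemma main_calc {a b : ℝ} (ha : 0 ≤ a) (hab : a ≤ b) (hb : b ≤ 1) :
    (volume.withDensity fun x => ENNReal.ofReal (F x))
      ((fun y => Int.fract (Real.logb 10 y)) ⁻¹' Ico a b) = ENNReal.ofReal (b - a) := by
  have hL := log10_pos
  set A := (10:ℝ) ^ a with hA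
  set B := (10:ℝ) ^ b with hB
  have hA0 : (0:ℝ) < A := rpow_ten_pos a
  have hB0 : (0:ℝ) < B := rpow_ten_pos b
  have hA1 : (1:ℝ) ≤ A := one_le_rpow_ten ha
  have hABle : A ≤ B := rpow_ten_mono hab
  have hA' : (10:ℝ) ^ (a+1) = 10 * A := by
    rw [hA, Real.rpow_add (by norm_num : (0:ℝ) < 10) a 1, Real.rpow_one]; ring
  have hB' : (10:ℝ) ^ (b+1) = 10 * B := by
    rw [hB, Real.rpow_add (by norm_num : (0:ℝ) < 10) b 1, Real.rpow_one]; ring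
  have hA'0 : (0:ℝ) < 10 * A := by linarith
  have hA'B' : 10 * A ≤ 10 * B := by linarith
  rw [measure_core (measurable_fract_logb measurableSet_Ico),
    preim_inter_low ha hb, preim_inter_high ha hb, hA', hB']
  rw [lint_of_nonneg hA0 hABle (int_g₁ hA0) (fun x hx => g₁_nonneg (le_trans hA1 hx.1)),
    lint_of_nonneg hA'0 hA'B' (int_g₂ hA'0) (fun x hx => g₂_nonneg)]
  have hnn1 : 0 ≤ ∫ x in A..B, g₁ x :=
    intervalIntegral.integral_nonneg hABle (fun x hx => g₁_nonneg (le_trans hA1 hx.1))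
  have hnn2 : 0 ≤ ∫ x in (10*A)..(10*B), g₂ x :=
    intervalIntegral.integral_nonneg hA'B' (fun x hx => g₂_nonneg)
  rw [← ENNReal.ofReal_add hnn1 hnn2]
  congr 1
  rw [ftc_g₁ hA0 hABle, ftc_g₂ hA'0 hA'B']
  have hlA : Real.log A = a * Real.log 10 := Real.log_rpow (by norm_num) a
  have hlB : Real.log B = b * Real.log 10 := Real.log_rpow (by norm_num) b
  rw [hlA, hlB]
  have hLne : Real.log 10 ≠ 0 := ne_of_gt hL
  field_simp
  ring

end BergerHillAux

open BergerHillAux in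
/-- The Berger–Hill example: `f(x) = (1/ln 10)(1/x − 1/x²)` on `[1,10)`,
`f(x) = (10/ln 10)(1/x²)` on `[10,100)`, and `0` otherwise, is a probability
density, and any random variable with this density is base-10 Benford. -/
theorem berger_hill_example_is_benford
    {Ω : Type*} [MeasurableSpace Ω] (ℙ : Measure Ω) [IsProbabilityMeasure ℙ]
    (f : ℝ → ℝ)
    (hfdef : ∀ x : ℝ, f x =
      if 1 ≤ x ∧ x < 10 then (1 / Real.log 10) * (1 / x - 1 / x ^ 2)
      else if 10 ≤ x ∧ x < 100 then (10 / Real.log 10) * (1 / x ^ 2)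
      else 0)
    (X : Ω → ℝ) (hX : Measurable X)
    (hlaw : Measure.map X ℙ = volume.withDensity (fun x => ENNReal.ofReal (f x))) :
    (∫ x, f x) = 1 ∧
    ℙ {ω | 0 < X ω} = 1 ∧
    Measure.map (fun ω => Int.fract (Real.logb 10 (X ω))) ℙ
      = volume.restrict (Set.Ico (0 : ℝ) 1) := by
  have hf : f = F := funext hfdef
  subst hf
  have hg := measurable_fract_logb
  -- total mass is 1
  have huniv : (volume.withDensity fun x => ENNReal.ofReal (F x)) Set.univ = 1 := by
    rw [← hlaw, Measure.map_apply hX MeasurableSet.univ]; simp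
  have hofReal : ENNReal.ofReal (∫ x, F x) = 1 := by
    rw [ofReal_integral_eq_lintegral_ofReal integrable_F (Filter.Eventually.of_forall F_nonneg)]
    have h := huniv
    rwa [withDensity_apply _ MeasurableSet.univ, Measure.restrict_univ] at h
  have part1 : (∫ x, F x) = 1 := by
    have h0 : 0 ≤ ∫ x, F x := integral_nonneg F_nonneg
    rw [← ENNReal.ofReal_one] at hofReal
    exact (ENNReal.ofReal_eq_ofReal_iff h0 zero_le_one).mp hofReal
  refine ⟨part1, ?_, ?_⟩
  · -- ℙ {0 < X} = 1
    have hset : {ω | 0 < X ω} = X ⁻¹' (Set.Ioi 0) := rfl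
    rw [hset, ← Measure.map_apply hX measurableSet_Ioi, hlaw]
    have hcompl : (volume.withDensity fun x => ENNReal.ofReal (F x)) (Set.Iic 0) = 0 := by
      rw [withDensity_apply _ measurableSet_Iic]
      have hz : ∀ x ∈ Set.Iic (0:ℝ), ENNReal.ofReal (F x) = 0 := by
        intro x hx
        have hx0 : x ≤ 0 := hx
        have : F x = 0 := by
          unfold F
          split_ifs with h1 h2
          · linarith [h1.1]
          · linarith [h2.1]
          · rfl
        simp [this]
      rw [setLIntegral_congr_fun measurableSet_Iic hz]
      simp
    have hadd := measure_add_measure_compl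
      (μ := volume.withDensity fun x => ENNReal.ofReal (F x)) (s := Set.Ioi (0:ℝ))
      measurableSet_Ioi
    rw [Set.compl_Ioi, hcompl, add_zero, huniv] at hadd
    exact hadd
  · -- the Benford property
    haveI : IsProbabilityMeasure
        (Measure.map (fun ω => Int.fract (Real.logb 10 (X ω))) ℙ) :=
      Measure.isProbabilityMeasure_map ((hg.comp hX).aemeasurable)
    have key : ∀ s : Set ℝ, MeasurableSet s →
        Measure.map (fun ω => Int.fract (Real.logb 10 (X ω))) ℙ s
          = (volume.withDensity fun x => ENNReal.ofReal (F x))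
              ((fun y => Int.fract (Real.logb 10 y)) ⁻¹' s) := by
      intro s hs
      rw [Measure.map_apply (f := fun ω => Int.fract (Real.logb 10 (X ω))) (hg.comp hX) hs]
      rw [show (fun ω => Int.fract (Real.logb 10 (X ω))) ⁻¹' s
          = X ⁻¹' ((fun y => Int.fract (Real.logb 10 y)) ⁻¹' s) from rfl]
      rw [← Measure.map_apply hX (hg hs), hlaw]
    refine Measure.ext_of_Ico _ _ (fun a b hab => ?_)
    rw [key _ measurableSet_Ico, Measure.restrict_apply measurableSet_Ico,
      Set.Ico_inter_Ico, Real.volume_Ico]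
    by_cases hcase : 0 < b ∧ a < 1
    · obtain ⟨hb0, ha1⟩ := hcase
      have hpre : (fun y => Int.fract (Real.logb 10 y)) ⁻¹' Set.Ico a b
          = (fun y => Int.fract (Real.logb 10 y)) ⁻¹' Set.Ico (max a 0) (min b 1) := by
        ext y
        simp only [Set.mem_preimage, Set.mem_Ico, max_le_iff, lt_min_iff]
        have h3 := Int.fract_nonneg (Real.logb 10 y)
        have h4 := Int.fract_lt_one (Real.logb 10 y)
        constructor
        · rintro ⟨h1, h2⟩; exact ⟨⟨h1, h3⟩, h2, h4⟩
        · rintro ⟨⟨h1, _⟩, h2, _⟩; exact ⟨h1, h2⟩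
      have hord : max a 0 ≤ min b 1 := by
        simp only [max_le_iff, le_min_iff]
        exact ⟨⟨hab.le, hb0.le⟩, ha1.le, zero_le_one⟩
      rw [hpre, main_calc (le_max_right a 0) hord (min_le_right b 1)]
    · push_neg at hcase
      have hempty : (fun y => Int.fract (Real.logb 10 y)) ⁻¹' Set.Ico a b = ∅ := by
        ext y
        simp only [Set.mem_preimage, Set.mem_Ico, Set.mem_empty_iff_false, iff_false, not_and,
          not_lt]
        intro h1
        have h3 := Int.fract_nonneg (Real.logb 10 y)
        have h4 := Int.fract_lt_one (Real.logb 10 y)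
        rcases le_or_gt b 0 with h | h
        · linarith
        · have := hcase h; linarith
      rw [hempty, measure_empty]
      symm
      rw [ENNReal.ofReal_eq_zero]
      rcases le_or_gt b 0 with h | h
      · have h5 : min b 1 ≤ b := min_le_left _ _
        have h6 : (0:ℝ) ≤ max a 0 := le_max_right _ _
        linarith
      · have h1 := hcase h
        have h5 : min b 1 ≤ 1 := min_le_right _ _
        have h6 : (1:ℝ) ≤ max a 0 := le_trans h1 (le_max_left _ _)
        linarith
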